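/- arXiv:1609.08353 — 2 statements merged into one kernel-verified Lean document; each statement's English description precedes it below -/
import Mathlib

section
/- (Sock Matching Theorem, second alternative) For n ≥ 1 and k ≥ 1, B_{n,k} = Σ_{j=0}^{n-1} ( B_{j,k} C_{n-j-1} + C_{j} B_{n-j-1,k-1} − B_{j,k} B_{n-j-1,k-1} ). -/
open Finset Real Filter

/-- A Dyck-path sequence `a_1, …, a_{2n}` (with `a 0 = 0` and zero padding
beyond index `2n` so that the set of such functions is finite):
`a 1 = 1`, `a (2n) = 0`, and consecutive values differ by exactly 1. -/
def IsDyckSeq (n : ℕ) (a : ℕ → ℕ) : Prop :=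
  a 1 = 1 ∧ a (2*n) = 0 ∧
  (∀ i, 1 ≤ i → i < 2*n → (a (i+1) = a i + 1 ∨ a i = a (i+1) + 1)) ∧
  a 0 = 0 ∧ ∀ i, 2*n < i → a i = 0

/-- `A n t`: number of Dyck-path sequences of semilength `n` of height at most `t`,
with the convention `A 0 t = 1`. -/
noncomputable def A (n t : ℕ) : ℕ :=
  if n = 0 then 1
  else Nat.card {a : ℕ → ℕ // IsDyckSeq n a ∧ ∀ i, a i ≤ t}

/-- `B n k`: number of Dyck-path sequences of semilength `n` of height at least `k`,
with the conventions `B 0 0 = 1`, `B 0 k = 0` for `k ≥ 1`. -/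
noncomputable def B (n k : ℕ) : ℕ :=
  if n = 0 then (if k = 0 then 1 else 0)
  else Nat.card {a : ℕ → ℕ // IsDyckSeq n a ∧ ∃ i, k ≤ a i}

/-- The `n`-th Catalan number `C_n = (1/(n+1)) * binomial(2n, n)`. -/
def C (n : ℕ) : ℕ := (2*n).choose n / (n + 1)

/-- Binomial coefficient with integer lower index, zero when negative. -/
def chooseZ (m : ℕ) (r : ℤ) : ℕ := if 0 ≤ r then m.choose r.toNat else 0

/-!
Let `L n h` count the Dyck paths of semilength `n` that stay strictly below height `h`; then
`B n k = C n - L n k` for all `n, k`, the conventions at `n = 0` included. Cutting a path at its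
first return to zero writes it uniquely as `U b D c`, which gives
`L (m+1) (h+1) = ∑_{i+j=m} L i h * L j (h+1)`, and for `h > n` the same recursion is Catalan's, so
the total count is `C n`. Substituting `B = C - L`, the `j`-th summand of the theorem becomes
`C j * C (n-1-j) - L j k * L (n-1-j) (k-1)`, and the two sums collapse to `C n` and `L n k`.
-/

/-- `IsDyckSeq` with the first step counted among the `±1` steps instead of fixing `a 1 = 1`,
so that the empty path (`n = 0`, `a = 0`) is included. -/
structure IsDyckPath (n : ℕ) (a : ℕ → ℕ) : Prop where
  map_zero : a 0 = 0
  map_two_mul : a (2 * n) = 0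
  step : ∀ i < 2 * n, a (i + 1) = a i + 1 ∨ a i = a (i + 1) + 1
  eq_zero_of_two_mul_lt : ∀ i, 2 * n < i → a i = 0

namespace IsDyckPath

variable {n : ℕ} {a : ℕ → ℕ}

theorem map_one (ha : IsDyckPath n a) (hn : n ≠ 0) : a 1 = 1 := by
  have := ha.step 0 (by omega)
  simp only [zero_add, ha.map_zero] at this
  omega

theorem le_self (ha : IsDyckPath n a) (i : ℕ) : a i ≤ i := by
  induction i with
  | zero => simp [ha.map_zero]
  | succ i ih =>
    rcases lt_or_ge i (2 * n) with hi | hi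
    · have := ha.step i hi; omega
    · have := ha.eq_zero_of_two_mul_lt (i + 1) (by omega); omega

theorem le_two_mul (ha : IsDyckPath n a) (i : ℕ) : a i ≤ 2 * n := by
  rcases le_or_gt i (2 * n) with hi | hi
  · exact (ha.le_self i).trans hi
  · simp [ha.eq_zero_of_two_mul_lt i hi]

theorem mod_two (ha : IsDyckPath n a) {i : ℕ} (hi : i ≤ 2 * n) : a i % 2 = i % 2 := by
  induction i with
  | zero => simp [ha.map_zero]
  | succ i ih =>
    have := ha.step i (by omega)
    have := ih (by omega)
    omega

end IsDyckPath

theorem isDyckSeq_iff_isDyckPath {n : ℕ} {a : ℕ → ℕ} (hn : n ≠ 0) :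
    IsDyckSeq n a ↔ IsDyckPath n a := by
  refine ⟨fun ⟨h1, h2n, hstep, h0, hzero⟩ => ⟨h0, h2n, fun i hi => ?_, hzero⟩,
    fun ha => ⟨ha.map_one hn, ha.map_two_mul, fun i _ hi => ha.step i hi, ha.map_zero,
      ha.eq_zero_of_two_mul_lt⟩⟩
  rcases i with _ | i
  · simp [h0, h1]
  · exact hstep _ (by omega) hi

theorem isDyckPath_zero_iff {a : ℕ → ℕ} : IsDyckPath 0 a ↔ a = 0 := by
  refine ⟨fun ha => funext fun i => ?_, fun ha => ⟨by simp [ha], by simp [ha], by simp,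
    by simp [ha]⟩⟩
  rcases i with _ | i
  · exact ha.map_zero
  · exact ha.eq_zero_of_two_mul_lt _ (by omega)

theorem finite_setOf_isDyckPath (n : ℕ) : {a | IsDyckPath n a}.Finite := by
  refine (Set.finite_range fun (f : Fin (2 * n + 1) → Fin (2 * n + 1)) (i : ℕ) =>
    if h : i < 2 * n + 1 then (f ⟨i, h⟩ : ℕ) else 0).subset fun a ha =>
      ⟨fun i => ⟨a i, Nat.lt_succ_of_le (ha.le_two_mul i)⟩, funext fun i => ?_⟩
  dsimp only
  split_ifs with h
  · rfl
  · exact (ha.eq_zero_of_two_mul_lt i (by omega)).symm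

instance (n : ℕ) (P : (ℕ → ℕ) → Prop) : Finite {a // IsDyckPath n a ∧ P a} :=
  ((finite_setOf_isDyckPath n).subset fun _ ha => ha.1).to_subtype

/-- The height profile of the path `U b D c`: `b`, of semilength `j`, raised by one, then `c`. -/
def nestAppend (j : ℕ) (b c : ℕ → ℕ) : ℕ → ℕ
  | 0 => 0
  | i + 1 => if i ≤ 2 * j then b i + 1 else c (i - (2 * j + 1))

section nestAppend

variable {j : ℕ} {b c : ℕ → ℕ}

@[simp]
theorem nestAppend_zero : nestAppend j b c 0 = 0 := rfl

theorem nestAppend_succ_of_le {i : ℕ} (hi : i ≤ 2 * j) : nestAppend j b c (i + 1) = b i + 1 :=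
  if_pos hi

theorem nestAppend_succ_of_lt {i : ℕ} (hi : 2 * j < i) :
    nestAppend j b c (i + 1) = c (i - (2 * j + 1)) :=
  if_neg (by omega)

theorem nestAppend_add_two_mul_add_two (i : ℕ) : nestAppend j b c (i + (2 * j + 2)) = c i := by
  rw [show i + (2 * j + 2) = i + 2 * j + 1 + 1 by omega, nestAppend_succ_of_lt (by omega)]
  congr 1
  omega

theorem IsDyckPath.nestAppend {m : ℕ} (hb : IsDyckPath j b) (hc : IsDyckPath m c) :
    IsDyckPath (j + m + 1) (nestAppend j b c) where
  map_zero := rfl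
  map_two_mul := by
    rw [show 2 * (j + m + 1) = 2 * m + (2 * j + 2) by ring, nestAppend_add_two_mul_add_two,
      hc.map_two_mul]
  step i hi := by
    rcases i with _ | i
    · simp [nestAppend_succ_of_le, hb.map_zero]
    rcases lt_trichotomy i (2 * j) with hij | rfl | hij
    · rw [nestAppend_succ_of_le hij.le, nestAppend_succ_of_le (i := i + 1) hij]
      have := hb.step i hij
      omega
    · rw [nestAppend_succ_of_le le_rfl, nestAppend_succ_of_lt (by omega), hb.map_two_mul]
      simp [hc.map_zero]
    · rw [nestAppend_succ_of_lt hij, nestAppend_succ_of_lt (by omega),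
        show i + 1 - (2 * j + 1) = i - (2 * j + 1) + 1 by omega]
      exact hc.step _ (by omega)
  eq_zero_of_two_mul_lt i hi := by
    obtain ⟨i, rfl⟩ : ∃ i', i = i' + 1 := ⟨i - 1, by omega⟩
    rw [nestAppend_succ_of_lt (by omega)]
    exact hc.eq_zero_of_two_mul_lt _ (by omega)

theorem forall_nestAppend_lt_succ_iff {h : ℕ} (hb : ∀ i, 2 * j < i → b i = 0) :
    (∀ i, nestAppend j b c i < h + 1) ↔ (∀ i, b i < h) ∧ ∀ i, c i < h + 1 := by
  constructor
  · intro ha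
    have hb0 : b 0 < h := by simpa [nestAppend_succ_of_le] using ha 1
    refine ⟨fun i => ?_, fun i => ?_⟩
    · rcases le_or_gt i (2 * j) with hi | hi
      · simpa [nestAppend_succ_of_le hi] using ha (i + 1)
      · simpa [hb i hi] using hb0.pos
    · simpa [nestAppend_add_two_mul_add_two] using ha (i + (2 * j + 2))
  · rintro ⟨hbh, hch⟩ (_ | i)
    · simp
    rcases le_or_gt i (2 * j) with hi | hi
    · simpa [nestAppend_succ_of_le hi] using hbh i
    · simpa [nestAppend_succ_of_lt hi] using hch _

theorem le_of_nestAppend_eq {j' : ℕ} {b' c' : ℕ → ℕ} (hc : c 0 = 0)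
    (h : nestAppend j b c = nestAppend j' b' c') : j' ≤ j := by
  by_contra hlt
  have := congrFun h (0 + (2 * j + 2))
  rw [nestAppend_add_two_mul_add_two, hc, show 0 + (2 * j + 2) = 2 * j + 1 + 1 by omega,
    nestAppend_succ_of_le (by omega)] at this
  omega

theorem nestAppend_inj {j' : ℕ} {b' c' : ℕ → ℕ} (hb : ∀ i, 2 * j < i → b i = 0)
    (hb' : ∀ i, 2 * j' < i → b' i = 0) (hc : c 0 = 0) (hc' : c' 0 = 0) :
    nestAppend j b c = nestAppend j' b' c' ↔ j = j' ∧ b = b' ∧ c = c' := by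
  refine ⟨fun h => ?_, by rintro ⟨rfl, rfl, rfl⟩; rfl⟩
  obtain rfl : j = j' := le_antisymm (le_of_nestAppend_eq hc' h.symm) (le_of_nestAppend_eq hc h)
  refine ⟨rfl, funext fun i => ?_, funext fun i => ?_⟩
  · rcases le_or_gt i (2 * j) with hi | hi
    · simpa [nestAppend_succ_of_le hi] using congrFun h (i + 1)
    · rw [hb i hi, hb' i hi]
  · simpa [nestAppend_add_two_mul_add_two] using congrFun h (i + (2 * j + 2))

end nestAppend

namespace IsDyckPath

variable {n : ℕ} {a : ℕ → ℕ}

theorem comp_add_two_mul (ha : IsDyckPath n a) {k : ℕ} (hk : k ≤ n) (hak : a (2 * k) = 0) :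
    IsDyckPath (n - k) (fun i => a (i + 2 * k)) where
  map_zero := by simpa using hak
  map_two_mul := by
    rw [show 2 * (n - k) + 2 * k = 2 * n by omega]
    exact ha.map_two_mul
  step i hi := by
    rw [show i + 1 + 2 * k = i + 2 * k + 1 by omega]
    exact ha.step _ (by omega)
  eq_zero_of_two_mul_lt i hi := ha.eq_zero_of_two_mul_lt _ (by omega)

theorem isDyckPath_lower {j : ℕ} (ha : IsDyckPath n a) (hj : j < n)
    (hpos : ∀ i ≤ 2 * j, 0 < a (i + 1)) (hret : a (2 * j + 2) = 0) :
    IsDyckPath j (fun i => if i ≤ 2 * j then a (i + 1) - 1 else 0) where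
  map_zero := by simp [ha.map_one (by omega)]
  map_two_mul := by
    have := ha.step (2 * j + 1) (by omega)
    have : a (2 * j + 1 + 1) = 0 := hret
    simp only [le_refl, if_true]
    omega
  step i hi := by
    have := ha.step (i + 1) (by omega)
    have := hpos i (by omega)
    have := hpos (i + 1) (by omega)
    simp only [if_pos (show i ≤ 2 * j by omega), if_pos (show i + 1 ≤ 2 * j by omega)]
    omega
  eq_zero_of_two_mul_lt i hi := if_neg (by omega)

theorem exists_eq_nestAppend (ha : IsDyckPath n a) (hn : n ≠ 0) :
    ∃ j m, j + m + 1 = n ∧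
      ∃ b c, IsDyckPath j b ∧ IsDyckPath m c ∧ a = _root_.nestAppend j b c := by
  have hex : ∃ r, 0 < r ∧ a r = 0 := ⟨2 * n, by omega, ha.map_two_mul⟩
  obtain ⟨r, ⟨hr0, hra⟩, hmin⟩ :
      ∃ r, (0 < r ∧ a r = 0) ∧ ∀ i < r, ¬(0 < i ∧ a i = 0) :=
    ⟨Nat.find hex, Nat.find_spec hex, fun _ => Nat.find_min hex⟩
  have hrn : r ≤ 2 * n := le_of_not_gt fun h => hmin _ h ⟨by omega, ha.map_two_mul⟩
  obtain ⟨j, rfl⟩ : ∃ j, r = 2 * j + 2 := by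
    have := ha.mod_two hrn
    have := ha.map_one hn
    have : r ≠ 1 := by rintro rfl; omega
    exact ⟨r / 2 - 1, by omega⟩
  have hpos : ∀ i ≤ 2 * j, 0 < a (i + 1) := fun i hi =>
    Nat.pos_of_ne_zero fun h => hmin (i + 1) (by omega) ⟨by omega, h⟩
  refine ⟨j, n - (j + 1), by omega, _, _, ha.isDyckPath_lower (by omega) hpos hra,
    ha.comp_add_two_mul (by omega) (by rwa [mul_add, mul_one]), funext fun i => ?_⟩
  rcases i with _ | i
  · exact ha.map_zero
  rcases le_or_gt i (2 * j) with hi | hi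
  · have := hpos i hi
    rw [nestAppend_succ_of_le hi, if_pos hi]
    omega
  · rw [nestAppend_succ_of_lt hi]
    show a (i + 1) = a (i - (2 * j + 1) + 2 * (j + 1))
    congr 1
    omega

end IsDyckPath

abbrev DyckPathBelow (n h : ℕ) : Type := {a : ℕ → ℕ // IsDyckPath n a ∧ ∀ i, a i < h}

theorem card_dyckPathBelow_succ_succ (m h : ℕ) :
    Nat.card (DyckPathBelow (m + 1) (h + 1)) = ∑ p ∈ antidiagonal m,
      Nat.card (DyckPathBelow p.1 h) * Nat.card (DyckPathBelow p.2 (h + 1)) := by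
  let F : (Σ p : antidiagonal m, DyckPathBelow p.1.1 h × DyckPathBelow p.1.2 (h + 1)) →
      DyckPathBelow (m + 1) (h + 1) := fun ⟨⟨_, hp⟩, ⟨b, hb, hbh⟩, ⟨c, hc, hch⟩⟩ =>
    ⟨nestAppend _ b c, mem_antidiagonal.1 hp ▸ hb.nestAppend hc,
      (forall_nestAppend_lt_succ_iff hb.eq_zero_of_two_mul_lt).2 ⟨hbh, hch⟩⟩
  have hF : Function.Bijective F := by
    constructor
    · rintro ⟨⟨⟨j, m₁⟩, hp⟩, ⟨b, hb, _⟩, ⟨c, hc, _⟩⟩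
        ⟨⟨⟨j', m₂⟩, hp'⟩, ⟨b', hb', _⟩, ⟨c', hc', _⟩⟩ hFeq
      obtain ⟨rfl, rfl, rfl⟩ := (nestAppend_inj hb.eq_zero_of_two_mul_lt
        hb'.eq_zero_of_two_mul_lt hc.map_zero hc'.map_zero).1 (congrArg Subtype.val hFeq)
      obtain rfl : m₁ = m₂ := by simp only [HasAntidiagonal.mem_antidiagonal] at hp hp'; omega
      rfl
    · rintro ⟨a, ha, hah⟩
      obtain ⟨j, m', hjm, b, c, hb, hc, rfl⟩ := ha.exists_eq_nestAppend m.succ_ne_zero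
      obtain ⟨hbh, hch⟩ := (forall_nestAppend_lt_succ_iff hb.eq_zero_of_two_mul_lt).1 hah
      exact ⟨⟨⟨(j, m'), mem_antidiagonal.2 (by omega)⟩, ⟨b, hb, hbh⟩, ⟨c, hc, hch⟩⟩,
        rfl⟩
  rw [← Nat.card_congr (Equiv.ofBijective F hF), Nat.card_sigma,
    ← sum_coe_sort (antidiagonal m)]
  simp only [Nat.card_prod]

theorem card_dyckPathBelow_zero_right (n : ℕ) : Nat.card (DyckPathBelow n 0) = 0 :=
  have : IsEmpty (DyckPathBelow n 0) := ⟨fun a => Nat.not_lt_zero _ (a.2.2 0)⟩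
  Nat.card_of_isEmpty

theorem card_dyckPathBelow_zero_succ (h : ℕ) : Nat.card (DyckPathBelow 0 (h + 1)) = 1 := by
  have : Unique (DyckPathBelow 0 (h + 1)) :=
    ⟨⟨⟨0, isDyckPath_zero_iff.2 rfl, fun _ => h.succ_pos⟩⟩,
      fun a => Subtype.ext (isDyckPath_zero_iff.1 a.2.1)⟩
  exact Nat.card_unique

theorem card_dyckPathBelow_eq_catalan {n h : ℕ} (hnh : n < h) :
    Nat.card (DyckPathBelow n h) = catalan n := by
  induction n using Nat.strong_induction_on generalizing h with
  | _ n ih =>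
  obtain ⟨h, rfl⟩ : ∃ h', h = h' + 1 := ⟨h - 1, by omega⟩
  rcases n with _ | m
  · rw [card_dyckPathBelow_zero_succ, catalan_zero]
  rw [card_dyckPathBelow_succ_succ, catalan_succ']
  refine sum_congr rfl fun p hp => ?_
  rw [HasAntidiagonal.mem_antidiagonal] at hp
  rw [ih _ (by omega) (by omega), ih _ (by omega) (by omega)]

theorem card_isDyckPath (n : ℕ) : Nat.card {a // IsDyckPath n a} = catalan n := by
  rw [← card_dyckPathBelow_eq_catalan (h := 2 * n + 1) (by omega)]
  exact Nat.card_congr (Equiv.subtypeEquivRight fun a =>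
    ⟨fun ha => ⟨ha, fun i => Nat.lt_succ_of_le (ha.le_two_mul i)⟩, And.left⟩)

theorem card_exists_le_add_card_dyckPathBelow (n k : ℕ) :
    Nat.card {a // IsDyckPath n a ∧ ∃ i, k ≤ a i} + Nat.card (DyckPathBelow n k) =
      catalan n := by
  classical
  rw [← card_isDyckPath, ← Nat.card_sum]
  refine Nat.card_congr (Equiv.trans (Equiv.sumCongr
    (Equiv.subtypeSubtypeEquivSubtypeInter _ _).symm ?_)
    (Equiv.sumCompl fun a : {a // IsDyckPath n a} => ∃ i, k ≤ a.1 i))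
  refine Equiv.trans (Equiv.subtypeEquivRight fun a => ?_)
    (Equiv.subtypeSubtypeEquivSubtypeInter (IsDyckPath n) fun a => ¬∃ i, k ≤ a i).symm
  simp only [not_exists, not_le]

theorem B_add_card_dyckPathBelow (n k : ℕ) :
    B n k + Nat.card (DyckPathBelow n k) = catalan n := by
  rcases eq_or_ne n 0 with rfl | hn
  · cases k <;> simp [B, card_dyckPathBelow_zero_right, card_dyckPathBelow_zero_succ]
  · rw [B, if_neg hn, ← card_exists_le_add_card_dyckPathBelow]
    congr 1
    exact Nat.card_congr (Equiv.subtypeEquivRight fun a =>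
      and_congr_left' (isDyckSeq_iff_isDyckPath hn))

theorem C_eq_catalan (n : ℕ) : C n = catalan n := by
  rw [catalan_eq_centralBinom_div, Nat.centralBinom, C]

theorem B_eq_catalan_sub (n k : ℕ) :
    (B n k : ℤ) = catalan n - Nat.card (DyckPathBelow n k) := by
  rw [← B_add_card_dyckPathBelow]
  push_cast
  ring

/-- the Sock Matching Theorem, second alternative. -/
theorem stmt8 (n k : ℕ) (hn : 1 ≤ n) (hk : 1 ≤ k) :
    (B n k : ℤ) = ∑ j ∈ Finset.range n,
      ((B j k : ℤ) * C (n-j-1) + (C j : ℤ) * B (n-j-1) (k-1)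
        - (B j k : ℤ) * B (n-j-1) (k-1)) := by
  obtain ⟨m, rfl⟩ := Nat.exists_eq_add_of_le' hn
  obtain ⟨h, rfl⟩ := Nat.exists_eq_add_of_le' hk
  rw [B_eq_catalan_sub, catalan_succ', card_dyckPathBelow_succ_succ]
  push_cast
  rw [← sum_sub_distrib, ← Nat.sum_antidiagonal_swap, Nat.sum_antidiagonal_eq_sum_range_succ_mk]
  refine sum_congr rfl fun j _ => ?_
  rw [show m + 1 - j - 1 = m - j by omega]
  simp only [Prod.swap_prod_mk, C_eq_catalan, B_eq_catalan_sub]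
  ring
end

section
/- For n, k ≥ 1, the explicit formula B_{n,k} = Σ_{j=1}^{⌊(n+1)/(k+1)⌋} binomial(2n+2, n+1 − j(k+1)) − 4 Σ_{j=1}^{⌊n/(k+1)⌋} binomial(2n, n − j(k+1)) holds. -/
open Finset Real Filter

/-!
Walks of length `m` from `0` to `x` that stay in `[0, t]` are counted by the reflection principle
in the strip between the walls `-1` and `t + 1`. Instead of building the reflection bijections,
we check that the bounded count and the alternating sum of unconstrained counts satisfy the same
last-step recursion and vanish on the walls.

`B n k` is the number of all Dyck paths minus those of height at most `k - 1`. Pairing the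
terms `j` and `-j` of the reflection sum and applying Pascal's rule twice produces the
coefficients `binomial(2n+2, ·) - 4 binomial(2n, ·)` of the formula.
-/

theorem Finset.sum_Icc_neg_eq_add_sum_Icc {M : Type*} [AddCommGroup M] (f : ℤ → M) (N : ℕ) :
    ∑ j ∈ Icc (-N : ℤ) N, f j = f 0 + ∑ j ∈ Icc 1 N, (f j + f (-j)) := by
  induction N with
  | zero => simp
  | succ N ih =>
    rw [Nat.cast_add_one, Finset.sum_Icc_succ_eq_add_endpoints, ih, sum_Icc_succ_top (by omega)]
    push_cast
    abel

/-- Zero padding past `m`, as in `IsDyckSeq`, makes the set of walks finite. -/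
structure IsWalk (m x : ℕ) (a : ℕ → ℕ) : Prop where
  zero : a 0 = 0
  step : ∀ i < m, a (i + 1) = a i + 1 ∨ a i = a (i + 1) + 1
  last : a m = x
  eq_zero_of_lt : ∀ i, m < i → a i = 0

namespace IsWalk

variable {m x : ℕ} {a : ℕ → ℕ}

theorem le_self_of_le (h : IsWalk m x a) {i : ℕ} (hi : i ≤ m) : a i ≤ i := by
  induction i with
  | zero => rw [h.zero]
  | succ i ih =>
    have := ih (by omega)
    rcases h.step i hi with h' | h' <;> omega

theorem le (h : IsWalk m x a) (i : ℕ) : a i ≤ m := by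
  rcases le_or_gt i m with hi | hi
  · exact (h.le_self_of_le hi).trans hi
  · simp [h.eq_zero_of_lt i hi]

theorem dropLast (h : IsWalk (m + 1) x a) : IsWalk m (a m) (Function.update a (m + 1) 0) where
  zero := by rw [Function.update_of_ne (by omega), h.zero]
  step i hi := by
    rw [Function.update_of_ne (by omega), Function.update_of_ne (by omega)]
    exact h.step i (by omega)
  last := Function.update_of_ne (by omega) _ _
  eq_zero_of_lt i hi := by
    rcases eq_or_ne i (m + 1) with rfl | hne
    · exact Function.update_self _ _ _
    · rw [Function.update_of_ne hne, h.eq_zero_of_lt i (by omega)]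

theorem snoc {y : ℕ} (h : IsWalk m y a) (hxy : x = y + 1 ∨ y = x + 1) :
    IsWalk (m + 1) x (Function.update a (m + 1) x) where
  zero := by rw [Function.update_of_ne (by omega), h.zero]
  step i hi := by
    rw [Function.update_of_ne (by omega : i ≠ m + 1)]
    rcases eq_or_ne i m with rfl | hne
    · rw [Function.update_self, h.last]
      omega
    · rw [Function.update_of_ne (by omega)]
      exact h.step i (by omega)
  last := Function.update_self _ _ _
  eq_zero_of_lt i hi := by rw [Function.update_of_ne (by omega), h.eq_zero_of_lt i (by omega)]

end IsWalk

theorem setOf_isWalk_finite (m x : ℕ) : {a | IsWalk m x a}.Finite := by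
  refine Set.Finite.of_finite_image (f := fun a (i : Fin (m + 1)) => a i) ?_ ?_
  · refine (Set.Finite.pi fun _ => Set.finite_Iic m).subset ?_
    rintro _ ⟨a, ha, rfl⟩ i -
    exact ha.le i
  · intro a ha b hb hab
    funext i
    rcases le_or_gt i m with hi | hi
    · exact congrFun hab ⟨i, by omega⟩
    · rw [ha.eq_zero_of_lt i hi, hb.eq_zero_of_lt i hi]

def boundedWalks (m t x : ℕ) : Set (ℕ → ℕ) := {a | IsWalk m x a ∧ ∀ i, a i ≤ t}

section BoundedWalks

variable {m t x : ℕ}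

theorem boundedWalks_finite : (boundedWalks m t x).Finite :=
  (setOf_isWalk_finite m x).subset fun _ ha => ha.1

theorem boundedWalks_eq_empty (h : t < x) : boundedWalks m t x = ∅ :=
  Set.eq_empty_of_forall_notMem fun a ha => by
    have := ha.2 m
    rw [ha.1.last] at this
    omega

theorem ncard_boundedWalks_zero : (boundedWalks 0 t x).ncard = if x = 0 then 1 else 0 := by
  split_ifs with hx
  · subst hx
    convert Set.ncard_singleton (0 : ℕ → ℕ)
    ext a
    refine ⟨fun ha => funext fun i => ?_, ?_⟩
    · rcases Nat.eq_zero_or_pos i with rfl | hi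
      · exact ha.1.zero
      · exact ha.1.eq_zero_of_lt i hi
    · rintro rfl
      exact ⟨⟨rfl, fun i hi => absurd hi (Nat.not_lt_zero i), rfl, fun _ _ => rfl⟩,
        fun _ => Nat.zero_le _⟩
  · convert Set.ncard_empty (ℕ → ℕ)
    exact Set.eq_empty_of_forall_notMem fun a ha => hx (ha.1.last.symm.trans ha.1.zero)

theorem boundedWalks_succ_zero : boundedWalks (m + 1) t 0 = boundedWalks m t 1 := by
  ext a
  constructor
  · rintro ⟨h, hle⟩
    have ham : a m = 1 := by rcases h.step m (by omega) with h' | h' <;> rw [h.last] at h' <;> omega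
    refine ⟨⟨h.zero, fun i hi => h.step i (by omega), ham, fun i hi => ?_⟩, hle⟩
    rcases eq_or_ne i (m + 1) with rfl | hne
    · exact h.last
    · exact h.eq_zero_of_lt i (by omega)
  · rintro ⟨h, hle⟩
    refine ⟨⟨h.zero, fun i hi => ?_, h.eq_zero_of_lt _ (by omega),
      fun i hi => h.eq_zero_of_lt i (by omega)⟩, hle⟩
    rcases eq_or_ne i m with rfl | hne
    · rw [h.last, h.eq_zero_of_lt (i + 1) (by omega)]
      omega
    · exact h.step i (by omega)

theorem boundedWalks_succ (hx : 1 ≤ x) (hxt : x ≤ t) :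
    boundedWalks (m + 1) t x = (Function.update · (m + 1) x) ''
      (boundedWalks m t (x - 1) ∪ boundedWalks m t (x + 1)) := by
  ext a
  constructor
  · rintro ⟨h, hle⟩
    have hbound : ∀ i, Function.update a (m + 1) 0 i ≤ t := fun i => by
      rcases eq_or_ne i (m + 1) with rfl | hne
      · simp
      · rw [Function.update_of_ne hne]
        exact hle i
    refine ⟨Function.update a (m + 1) 0, ?_, by simp [← h.last]⟩
    rcases h.step m (by omega) with h' | h' <;> rw [h.last] at h'
    · exact Or.inl ⟨by simpa [show a m = x - 1 by omega] using h.dropLast, hbound⟩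
    · exact Or.inr ⟨by simpa [h'] using h.dropLast, hbound⟩
  · rintro ⟨b, hb, rfl⟩
    have hbound : ∀ i, b i ≤ t := by rcases hb with hb | hb <;> exact hb.2
    refine ⟨?_, fun i => ?_⟩
    · rcases hb with hb | hb <;> exact hb.1.snoc (by omega)
    · rcases eq_or_ne i (m + 1) with rfl | hne
      · simpa using hxt
      · simpa [Function.update_of_ne hne] using hbound i

theorem ncard_boundedWalks_succ (hx : 1 ≤ x) (hxt : x ≤ t) :
    (boundedWalks (m + 1) t x).ncard =
      (boundedWalks m t (x - 1)).ncard + (boundedWalks m t (x + 1)).ncard := by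
  have hlast : ∀ b ∈ boundedWalks m t (x - 1) ∪ boundedWalks m t (x + 1), b (m + 1) = 0 := by
    rintro b (hb | hb) <;> exact hb.1.eq_zero_of_lt _ (by omega)
  rw [boundedWalks_succ hx hxt, Set.InjOn.ncard_image, Set.ncard_union_eq _ boundedWalks_finite
    boundedWalks_finite]
  · refine Set.disjoint_left.mpr fun a ha ha' => ?_
    have := ha.1.last.symm.trans ha'.1.last
    omega
  · intro b hb b' hb' hbb'
    funext i
    rcases eq_or_ne i (m + 1) with rfl | hne
    · rw [hlast b hb, hlast b' hb']
    · simpa [Function.update_of_ne hne] using congrFun hbb' i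

end BoundedWalks

def walkCount : ℕ → ℤ → ℤ
  | 0, y => if y = 0 then 1 else 0
  | m + 1, y => walkCount m (y - 1) + walkCount m (y + 1)

theorem walkCount_eq_zero_of_lt_abs {m : ℕ} {y : ℤ} (h : (m : ℤ) < |y|) :
    walkCount m y = 0 := by
  induction m generalizing y with
  | zero =>
    have hy : y ≠ 0 := abs_pos.mp (by simpa using h)
    simp [walkCount, hy]
  | succ m ih =>
    rw [lt_abs] at h
    push_cast at h
    rw [walkCount, ih, ih, add_zero] <;> rw [lt_abs] <;> omega

theorem walkCount_neg (m : ℕ) (y : ℤ) : walkCount m (-y) = walkCount m y := by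
  induction m generalizing y with
  | zero => simp [walkCount]
  | succ m ih =>
    rw [walkCount, walkCount, show -y - 1 = -(y + 1) by ring, show -y + 1 = -(y - 1) by ring, ih,
      ih, add_comm]

theorem walkCount_sub_two_mul (m i : ℕ) : walkCount m (m - 2 * i) = m.choose i := by
  induction m generalizing i with
  | zero =>
    rcases i with _ | i
    · simp [walkCount]
    · simp [walkCount]
      omega
  | succ m ih =>
    rw [walkCount]
    cases i with
    | zero =>
      rw [walkCount_eq_zero_of_lt_abs (y := _ + 1) (by rw [lt_abs]; push_cast; omega)]
      simpa using ih 0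
    | succ i =>
      rw [Nat.choose_succ_succ', Nat.cast_add (m.choose i), ← ih i, ← ih (i + 1)]
      push_cast
      ring_nf

theorem walkCount_two_mul {m y : ℕ} (h : y ≤ m) :
    walkCount (2 * m) (2 * y) = (2 * m).choose (m - y) := by
  rw [← walkCount_sub_two_mul]
  push_cast [Nat.cast_sub h]
  ring_nf

theorem walkCount_add_two_sub_four_mul (m : ℕ) (y : ℤ) :
    walkCount (m + 2) y - 4 * walkCount m y =
      (walkCount m (y - 2) - walkCount m y) + (walkCount m (-y - 2) - walkCount m (-y)) := by
  rw [show -y - 2 = -(y + 2) by ring, walkCount_neg, walkCount_neg]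
  simp only [walkCount]
  ring_nf

noncomputable def periodicWalkCount (m : ℕ) (p y : ℤ) : ℤ :=
  ∑ᶠ j : ℤ, walkCount m (y + j * p)

section PeriodicWalkCount

variable {m : ℕ} {p : ℤ}

theorem support_walkCount_add_mul_subset {N : ℕ} {y : ℤ} (h : |y| + m < (N + 1) * |p|) :
    (Function.support fun j : ℤ => walkCount m (y + j * p)) ⊆ Set.Icc (-N : ℤ) N := by
  intro j hj
  by_contra hmem
  refine hj (walkCount_eq_zero_of_lt_abs ?_)
  have hjN : (N : ℤ) + 1 ≤ |j| := by
    rw [Set.mem_Icc, not_and_or, not_le, not_le] at hmem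
    rw [le_abs]
    omega
  have hsub : |j * p| ≤ |y + j * p| + |y| := by simpa using abs_sub (y + j * p) y
  rw [abs_mul] at hsub
  nlinarith [abs_nonneg p]

theorem hasFiniteSupport_walkCount_add_mul (hp : p ≠ 0) (y : ℤ) :
    Function.HasFiniteSupport fun j : ℤ => walkCount m (y + j * p) := by
  refine (Set.finite_Icc _ _).subset (support_walkCount_add_mul_subset (N := (|y| + m).toNat) ?_)
  have hp1 : 1 ≤ |p| := Int.one_le_abs hp
  nlinarith [Int.self_le_toNat (|y| + m), abs_nonneg y]

theorem periodicWalkCount_succ (hp : p ≠ 0) (y : ℤ) :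
    periodicWalkCount (m + 1) p y =
      periodicWalkCount m p (y - 1) + periodicWalkCount m p (y + 1) := by
  rw [periodicWalkCount, periodicWalkCount, periodicWalkCount, ← finsum_add_distrib
    (hasFiniteSupport_walkCount_add_mul hp _) (hasFiniteSupport_walkCount_add_mul hp _)]
  congr 1
  funext j
  rw [walkCount]
  ring_nf

theorem periodicWalkCount_add_self (y : ℤ) :
    periodicWalkCount m p (y + p) = periodicWalkCount m p y := by
  rw [periodicWalkCount, periodicWalkCount]
  conv_rhs => rw [← finsum_comp_equiv (Equiv.addRight 1)]
  congr 1
  funext j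
  rw [Equiv.coe_addRight]
  ring_nf

theorem periodicWalkCount_eq_walkCount {y : ℤ} (h : |y| + m < |p|) :
    periodicWalkCount m p y = walkCount m y := by
  rw [periodicWalkCount, finsum_eq_sum_of_support_subset _ (s := Icc 0 0)
    (by simpa using support_walkCount_add_mul_subset (N := 0) (by simpa using h))]
  simp

end PeriodicWalkCount

/-- The reflection-principle count of walks of length `m` from `0` to `x` inside `[0, t]`:
the reflection in the wall `-1` is `x ↦ -2 - x`, and composing it with the reflection in the
wall `t + 1` translates by `2 (t + 2)`. -/
noncomputable def reflectedCount (m t : ℕ) (x : ℤ) : ℤ :=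
  periodicWalkCount m (2 * (t + 2)) x - periodicWalkCount m (2 * (t + 2)) (-2 - x)

section ReflectedCount

variable {m t : ℕ}

theorem reflectedCount_succ (x : ℤ) :
    reflectedCount (m + 1) t x = reflectedCount m t (x - 1) + reflectedCount m t (x + 1) := by
  have hp : (2 * ((t : ℤ) + 2)) ≠ 0 := by positivity
  simp only [reflectedCount, periodicWalkCount_succ hp]
  ring_nf

theorem reflectedCount_neg_one : reflectedCount m t (-1) = 0 := by
  rw [reflectedCount]
  norm_num

theorem reflectedCount_wall : reflectedCount m t (t + 1) = 0 := by
  rw [reflectedCount, ← periodicWalkCount_add_self (-2 - _)]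
  ring_nf

theorem reflectedCount_zero {x : ℤ} (h0 : 0 ≤ x) (hx : x ≤ t + 1) :
    reflectedCount 0 t x = if x = 0 then 1 else 0 := by
  rw [reflectedCount, periodicWalkCount_eq_walkCount, periodicWalkCount_eq_walkCount]
  · simp only [walkCount]
    split_ifs <;> omega
  all_goals rw [abs_of_pos (by positivity : (0 : ℤ) < 2 * (t + 2))]
  · rw [abs_of_neg (by omega)]
    omega
  · rw [abs_of_nonneg h0]
    omega

theorem reflectedCount_zero_of_lt (h : m < 2 * t + 2) :
    reflectedCount m t 0 = walkCount m 0 - walkCount m (-2) := by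
  have hp : |(2 * ((t : ℤ) + 2))| = 2 * (t + 2) := abs_of_pos (by positivity)
  rw [reflectedCount, periodicWalkCount_eq_walkCount, periodicWalkCount_eq_walkCount] <;>
    norm_num [hp] <;> omega

end ReflectedCount

theorem ncard_boundedWalks (m : ℕ) {t x : ℕ} (hx : x ≤ t + 1) :
    ((boundedWalks m t x).ncard : ℤ) = reflectedCount m t x := by
  induction m generalizing x with
  | zero =>
    rw [ncard_boundedWalks_zero, reflectedCount_zero (by positivity) (by exact_mod_cast hx)]
    split_ifs <;> simp_all
  | succ m ih =>
    rcases Nat.eq_zero_or_pos x with rfl | hx0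
    · rw [boundedWalks_succ_zero, ih (by omega), reflectedCount_succ, Nat.cast_zero, zero_sub,
        zero_add, reflectedCount_neg_one, zero_add, Nat.cast_one]
    rcases hx.lt_or_eq with hxt | rfl
    · rw [ncard_boundedWalks_succ hx0 (by omega), Nat.cast_add, ih (by omega), ih (by omega),
        reflectedCount_succ]
      push_cast [Nat.cast_sub hx0]
      rfl
    · rw [boundedWalks_eq_empty (by omega), Set.ncard_empty, Nat.cast_zero, Nat.cast_add,
        Nat.cast_one, reflectedCount_wall]

theorem isDyckSeq_iff_isWalk {n : ℕ} (hn : 1 ≤ n) {a : ℕ → ℕ} :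
    IsDyckSeq n a ↔ IsWalk (2 * n) 0 a := by
  constructor
  · rintro ⟨h1, hlast, hstep, h0, hzero⟩
    refine ⟨h0, fun i hi => ?_, hlast, hzero⟩
    rcases Nat.eq_zero_or_pos i with rfl | hi0
    · left
      rw [h1, h0]
    · exact hstep i hi0 hi
  · intro h
    refine ⟨?_, h.last, fun i _ hi => h.step i hi, h.zero, h.eq_zero_of_lt⟩
    have := h.step 0 (by omega)
    rw [zero_add, h.zero] at this
    omega

theorem B_eq_ncard_sub {n k : ℕ} (hn : 1 ≤ n) (hk : 1 ≤ k) :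
    (B n k : ℤ) =
      (boundedWalks (2 * n) (2 * n) 0).ncard - (boundedWalks (2 * n) (k - 1) 0).ncard := by
  have hset : {a | IsDyckSeq n a ∧ ∃ i, k ≤ a i} =
      boundedWalks (2 * n) (2 * n) 0 \ boundedWalks (2 * n) (k - 1) 0 := by
    ext a
    simp only [boundedWalks, Set.mem_ofPred_eq, Set.mem_sdiff, isDyckSeq_iff_isWalk hn, not_and,
      not_forall, not_le]
    constructor
    · rintro ⟨h, i, hi⟩
      exact ⟨⟨h, h.le⟩, fun _ => ⟨i, by omega⟩⟩
    · rintro ⟨⟨h, -⟩, hhigh⟩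
      obtain ⟨i, hi⟩ := hhigh h
      exact ⟨h, i, by omega⟩
  have hsub : boundedWalks (2 * n) (k - 1) 0 ⊆ boundedWalks (2 * n) (2 * n) 0 :=
    fun a ha => ⟨ha.1, ha.1.le⟩
  have hcard := Set.ncard_sdiff_add_ncard_of_subset hsub boundedWalks_finite
  rw [B, if_neg (by omega), show Nat.card {a // IsDyckSeq n a ∧ ∃ i, k ≤ a i} =
    Nat.card ↥{a | IsDyckSeq n a ∧ ∃ i, k ≤ a i} from rfl, Nat.card_coe_set_eq, hset,
    ← hcard]
  push_cast
  ring

theorem sum_choose_eq_sum_walkCount {m L N : ℕ} (hL : 0 < L) (hN : m / L ≤ N) :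
    ∑ j ∈ Icc 1 (m / L), ((2 * m).choose (m - j * L) : ℤ) =
      ∑ j ∈ Icc 1 N, walkCount (2 * m) (2 * (j * L : ℕ)) := by
  refine Finset.sum_subset_zero_on_sdiff (Icc_subset_Icc_right hN) (fun j hj => ?_) fun j hj => ?_
  · simp only [Finset.mem_sdiff, Finset.mem_Icc, not_and, not_le] at hj
    have hlt : m < j * L := (Nat.div_lt_iff_lt_mul hL).mp (hj.2 hj.1.1)
    exact walkCount_eq_zero_of_lt_abs (by rw [abs_of_nonneg (by positivity)]; push_cast; omega)
  · have hle : j * L ≤ m := (Nat.le_div_iff_mul_le hL).mp (mem_Icc.mp hj).2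
    exact (walkCount_two_mul hle).symm

theorem B_eq_sum_walkCount {n k : ℕ} (hn : 1 ≤ n) (hk : 1 ≤ k) :
    (B n k : ℤ) = ∑ j ∈ Icc 1 (n + 1), (walkCount (2 * n + 2) (2 * (j * (k + 1) : ℕ)) -
      4 * walkCount (2 * n) (2 * (j * (k + 1) : ℕ))) := by
  set p : ℤ := 2 * (k + 1)
  have hp : |p| = 2 * (k + 1) := abs_of_pos (by positivity)
  have hsupp : ∀ y : ℤ, |y| ≤ 2 → (Function.support fun j => walkCount (2 * n) (y + j * p))
      ⊆ Set.Icc (-(n + 1 : ℕ) : ℤ) (n + 1 : ℕ) := fun y hy =>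
    support_walkCount_add_mul_subset (by rw [hp]; push_cast; nlinarith)
  have hbounded : reflectedCount (2 * n) (k - 1) 0 =
      ∑ j ∈ Icc (-(n + 1 : ℕ) : ℤ) (n + 1 : ℕ),
        (walkCount (2 * n) (0 + j * p) - walkCount (2 * n) (-2 - 0 + j * p)) := by
    have hp0 : p ≠ 0 := by positivity
    rw [reflectedCount, show 2 * (((k - 1 : ℕ) : ℤ) + 2) = p by omega, periodicWalkCount,
      periodicWalkCount, ← finsum_sub_distrib (hasFiniteSupport_walkCount_add_mul hp0 _)
        (hasFiniteSupport_walkCount_add_mul hp0 _), finsum_eq_sum_of_support_subset]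
    rw [coe_Icc]
    exact (Function.support_sub _ _).trans
      (Set.union_subset (hsupp 0 (by norm_num)) (hsupp _ (by norm_num)))
  rw [B_eq_ncard_sub hn hk, ncard_boundedWalks _ (by omega), ncard_boundedWalks _ (by omega),
    Nat.cast_zero, reflectedCount_zero_of_lt (by omega), hbounded, sum_Icc_neg_eq_add_sum_Icc,
    zero_mul, add_zero, add_zero, sub_zero, sub_add_eq_sub_sub, sub_self, zero_sub,
    ← sum_neg_distrib]
  refine sum_congr rfl fun j _ => ?_
  rw [walkCount_add_two_sub_four_mul]
  simp only [p]
  push_cast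
  ring_nf

/-- explicit formula for B. -/
theorem stmt9 (n k : ℕ) (hn : 1 ≤ n) (hk : 1 ≤ k) :
    (B n k : ℤ) =
      (∑ j ∈ Finset.Icc 1 ((n+1)/(k+1)), ((2*n+2).choose (n+1 - j*(k+1)) : ℤ))
        - 4 * ∑ j ∈ Finset.Icc 1 (n/(k+1)), ((2*n).choose (n - j*(k+1)) : ℤ) := by
  rw [B_eq_sum_walkCount hn hk, sum_sub_distrib, ← mul_sum, show 2 * n + 2 = 2 * (n + 1) by ring,
    sum_choose_eq_sum_walkCount (by omega) (Nat.div_le_self _ _),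
    sum_choose_eq_sum_walkCount (N := n + 1) (by omega) ((Nat.div_le_self _ _).trans (by omega))]
end
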